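/- Let I be an irreducible interval of a MinBudget instance (N, ⊴, c). Then every filter F ⊆ I of ⊴_I satisfies c(F) ≤ max{0, c(I)}. -/

import Mathlib

open List

variable {ι : Type*} [DecidableEq ι]

/-- Total cost of a schedule (list of jobs). -/
def listCost (c : ι → ℝ) (S : List ι) : ℝ := (S.map c).sum

/-- Budget of a schedule: maximum cost of a prefix (the empty prefix has cost 0). -/
def listBudget (c : ι → ℝ) : List ι → ℝ
  | [] => 0
  | j :: t => max 0 (c j + listBudget c t)

/-- Return of a schedule. -/
def listReturn (c : ι → ℝ) (S : List ι) : ℝ := listCost c S - listBudget c S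

/-- `S` enumerates the finite job set `N` without repetition. -/
def IsScheduleOf (N : Finset ι) (S : List ι) : Prop :=
  S.Nodup ∧ ∀ j, j ∈ S ↔ j ∈ N

/-- `S` is a linear extension of the precedence relation `r` (restricted to its jobs). -/
def RespectsOrder (r : ι → ι → Prop) (S : List ι) : Prop :=
  ∀ i j, r i j → i ∈ S → j ∈ S → S.idxOf i ≤ S.idxOf j

/-- Minimum budget over all feasible schedules of the job set `X`. -/
noncomputable def setBudget (r : ι → ι → Prop) (c : ι → ℝ) (X : Finset ι) : ℝ :=
  sInf {b | ∃ S : List ι, IsScheduleOf X S ∧ RespectsOrder r S ∧ listBudget c S = b}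

/-- Total cost of a job set. -/
def setCost (c : ι → ℝ) (X : Finset ι) : ℝ := ∑ j ∈ X, c j

/-- Return of a job set. -/
noncomputable def setReturn (r : ι → ι → Prop) (c : ι → ℝ) (X : Finset ι) : ℝ :=
  setCost c X - setBudget r c X

/-- The cbr-preorder on job sets. -/
def cbrLE (r : ι → ι → Prop) (c : ι → ℝ) (X Y : Finset ι) : Prop :=
  (setCost c X < 0 ∧ 0 ≤ setCost c Y) ∨
  (setCost c X < 0 ∧ setCost c Y < 0 ∧ setBudget r c X < setBudget r c Y) ∨
  (setCost c X < 0 ∧ setCost c Y < 0 ∧ setBudget r c X = setBudget r c Y ∧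
    setReturn r c X ≤ setReturn r c Y) ∨
  (0 ≤ setCost c X ∧ 0 ≤ setCost c Y ∧ setReturn r c X ≤ setReturn r c Y)

/-- `J` is an ideal (downward-closed subset) of `r` restricted to `I`. -/
def IsIdealIn (r : ι → ι → Prop) (I J : Finset ι) : Prop :=
  J ⊆ I ∧ ∀ j ∈ J, ∀ i ∈ I, r i j → i ∈ J

/-- `F` is a filter (upward-closed subset) of `r` restricted to `I`. -/
def IsFilterIn (r : ι → ι → Prop) (I F : Finset ι) : Prop :=
  F ⊆ I ∧ ∀ i ∈ F, ∀ j ∈ I, r i j → j ∈ F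

/-- `I` is an interval of `r` on `N`: intersection of an ideal and a filter. -/
def IsIntervalIn (r : ι → ι → Prop) (N I : Finset ι) : Prop :=
  ∃ J F, IsIdealIn r N J ∧ IsFilterIn r N F ∧ I = J ∩ F

/-- An irreducible interval: every ideal of the restricted order is `⪰` the interval. -/
def IsIrreducibleIn (r : ι → ι → Prop) (c : ι → ℝ) (N I : Finset ι) : Prop :=
  IsIntervalIn r N I ∧ ∀ J, IsIdealIn r I J → cbrLE r c I J

/-- A schedule (given as blocks `SS`) in increasing irreducible structure. -/
def IncIrrStructure (r : ι → ι → Prop) (c : ι → ℝ) (N : Finset ι)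
    (SS : List (List ι)) : Prop :=
  IsScheduleOf N SS.flatten ∧ RespectsOrder r SS.flatten ∧
  (∀ S ∈ SS, IsIrreducibleIn r c N S.toFinset ∧ RespectsOrder r S ∧
    listBudget c S = setBudget r c S.toFinset) ∧
  ∀ i j : Fin SS.length, i < j → cbrLE r c (SS.get i).toFinset (SS.get j).toFinset

/-!
If `c(I) ≥ 0`, irreducibility against the ideal `I \ F` gives `c(I \ F) ≥ 0`, i.e. `c(F) ≤ c(I)`.
If `c(I) < 0`, take a filter `F₀` of maximum cost. Deleting the jobs of `F₀` from a feasible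
schedule of `I` yields a feasible schedule of the ideal `I \ F₀` with no larger budget, so
`b(I \ F₀) ≤ b(I)`, and irreducibility forces `c(I) ≤ c(I \ F₀) = c(I) - c(F₀)`. Hence every
filter costs at most `c(F₀) ≤ 0`.
-/

section Schedules

variable {α : Type*} {r : α → α → Prop}

theorem listBudget_le_iff {c : α → ℝ} {S : List α} {B : ℝ} :
    listBudget c S ≤ B ↔ 0 ≤ B ∧ ∀ P, P <+: S → listCost c P ≤ B := by
  induction S generalizing B with
  | nil => simp [listBudget, listCost]
  | cons j t ih =>
    simp only [listBudget, max_le_iff, List.prefix_cons_iff, forall_eq_or_imp, listCost,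
      List.map_nil, List.sum_nil, forall_exists_index, and_imp]
    rw [← le_sub_iff_add_le', ih]
    constructor
    · rintro ⟨hB, -, ht⟩
      refine ⟨hB, hB, fun P Q hP hQ => ?_⟩
      subst hP
      have := ht Q hQ
      simp only [listCost, List.map_cons, List.sum_cons] at this ⊢
      linarith
    · rintro ⟨hB, -, ht⟩
      refine ⟨hB, by simpa using ht [j] [] rfl List.nil_prefix, fun Q hQ => ?_⟩
      have := ht (j :: Q) Q rfl hQ
      simp only [listCost, List.map_cons, List.sum_cons] at this ⊢
      linarith

theorem listBudget_nonneg (c : α → ℝ) (S : List α) : 0 ≤ listBudget c S :=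
  (listBudget_le_iff.1 le_rfl).1

theorem listCost_le_listBudget {c : α → ℝ} {P S : List α} (h : P <+: S) :
    listCost c P ≤ listBudget c S :=
  (listBudget_le_iff.1 le_rfl).2 P h

theorem listCost_eq_setCost [DecidableEq α] (c : α → ℝ) {S : List α} (h : S.Nodup) :
    listCost c S = setCost c S.toFinset :=
  (List.sum_toFinset c h).symm

theorem exists_minimal_of_trans_of_antisymm [IsTrans α r] [Std.Antisymm r] {X : Finset α}
    (hX : X.Nonempty) : ∃ m ∈ X, ∀ i ∈ X, r i m → i = m := by
  let : LE α := ⟨r⟩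
  have : IsTrans α (· ≤ ·) := ‹IsTrans α r›
  obtain ⟨m, hmX, hmin⟩ := X.exists_minimal hX
  exact ⟨m, hmX, fun i hi him => antisymm him (hmin hi him)⟩

variable [DecidableEq α]

theorem respectsOrder_iff_forall_prefix {S : List α} :
    RespectsOrder r S ↔ ∀ Q, Q <+: S → ∀ i j, r i j → i ∈ S → j ∈ Q → i ∈ Q := by
  constructor
  · intro h Q hQ i j hij hi hj
    have hle := h i j hij hi (hQ.subset hj)
    rw [hQ.mem_iff_idxOf_lt_length] at hj ⊢
    exact hle.trans_lt hj
  · intro h i j hij hi hj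
    have := h _ (S.take_prefix (S.idxOf j + 1)) i j hij hi
      ((List.mem_take_iff_idxOf_lt hj).2 (Nat.lt_succ_self _))
    exact Nat.lt_succ_iff.1 ((List.mem_take_iff_idxOf_lt hi).1 this)

theorem RespectsOrder.filter {S : List α} (h : RespectsOrder r S) (p : α → Bool) :
    RespectsOrder r (S.filter p) := by
  rw [respectsOrder_iff_forall_prefix] at h ⊢
  intro Q' hQ' i j hij hi hj
  obtain ⟨Q, hQ, rfl⟩ := List.prefix_filter_iff.1 hQ'
  rw [List.mem_filter] at hi hj ⊢
  exact ⟨h Q hQ i j hij hi.1 hj.1, hi.2⟩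

theorem RespectsOrder.cons {m : α} {S : List α} (h : RespectsOrder r S)
    (hm : ∀ i ∈ S, r i m → i = m) : RespectsOrder r (m :: S) := by
  intro i j hij hi hj
  by_cases him : i = m
  · simp [him]
  have hiS : i ∈ S := (List.mem_cons.1 hi).resolve_left him
  have hjm : j ≠ m := by rintro rfl; exact him (hm i hiS hij)
  rw [List.idxOf_cons_ne _ (Ne.symm him), List.idxOf_cons_ne _ (Ne.symm hjm)]
  exact Nat.succ_le_succ (h i j hij hiS ((List.mem_cons.1 hj).resolve_left hjm))

theorem IsScheduleOf.filter_notMem {X Y : Finset α} {S : List α} (hS : IsScheduleOf X S) :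
    IsScheduleOf (X \ Y) (S.filter (· ∉ Y)) :=
  ⟨hS.1.filter _, fun j => by simp [hS.2 j]⟩

theorem exists_schedule [IsTrans α r] [Std.Antisymm r] (X : Finset α) :
    ∃ S, IsScheduleOf X S ∧ RespectsOrder r S := by
  induction X using Finset.strongInduction with
  | H X ih =>
    rcases X.eq_empty_or_nonempty with rfl | hX
    · exact ⟨[], ⟨List.nodup_nil, by simp⟩, fun _ _ _ hi => absurd hi List.not_mem_nil⟩
    obtain ⟨m, hmX, hmin⟩ := exists_minimal_of_trans_of_antisymm (r := r) hX
    obtain ⟨S, ⟨hnd, hmem⟩, hSr⟩ := ih (X.erase m) (Finset.erase_ssubset hmX)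
    refine ⟨m :: S, ⟨List.nodup_cons.2 ⟨by simp [hmem], hnd⟩, fun j => ?_⟩, ?_⟩
    · by_cases hjm : j = m <;> simp [hjm, hmem, hmX]
    · exact hSr.cons fun i hi => hmin i (Finset.mem_of_mem_erase ((hmem i).1 hi))

end Schedules

section Filters

variable {α : Type*} {r : α → α → Prop} {I F J : Finset α}

theorem IsFilterIn.isIdealIn_sdiff [DecidableEq α] (hF : IsFilterIn r I F) :
    IsIdealIn r I (I \ F) := by
  refine ⟨Finset.sdiff_subset, fun j hj i hi hij => ?_⟩
  rw [Finset.mem_sdiff] at hj ⊢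
  exact ⟨hi, fun hiF => hj.2 (hF.2 i hiF j hj.1 hij)⟩

theorem IsFilterIn.sdiff_isIdealIn [DecidableEq α] (hF : IsFilterIn r I F) (hJ : IsIdealIn r I J) :
    IsFilterIn r I (F \ J) := by
  refine ⟨Finset.sdiff_subset.trans hF.1, fun i hi j hj hij => ?_⟩
  rw [Finset.mem_sdiff] at hi ⊢
  exact ⟨hF.2 i hi.1 j hj hij, fun hjJ => hi.2 (hJ.2 j hjJ i (hF.1 hi.1) hij)⟩

def IsMaxCostFilterIn (r : α → α → Prop) (c : α → ℝ) (I F : Finset α) : Prop :=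
  IsFilterIn r I F ∧ ∀ F', IsFilterIn r I F' → setCost c F' ≤ setCost c F

theorem exists_isMaxCostFilterIn (r : α → α → Prop) (c : α → ℝ) (I : Finset α) :
    ∃ F, IsMaxCostFilterIn r c I F := by
  classical
  obtain ⟨F, hF, hmax⟩ := (I.powerset.filter (IsFilterIn r I)).exists_max_image (setCost c)
    ⟨∅, Finset.mem_filter.2 ⟨Finset.empty_mem_powerset I, Finset.empty_subset I, by simp⟩⟩
  exact ⟨F, (Finset.mem_filter.1 hF).2, fun F' hF' =>
    hmax F' (Finset.mem_filter.2 ⟨Finset.mem_powerset.2 hF'.1, hF'⟩)⟩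

/-- Removing a maximum-cost filter from an ideal cannot increase its cost: what is removed,
`J ∩ F`, is the complement in `F` of the filter `F \ J`, so it has nonnegative cost. -/
theorem IsMaxCostFilterIn.setCost_sdiff_le [DecidableEq α] {c : α → ℝ}
    (hF : IsMaxCostFilterIn r c I F) (hJ : IsIdealIn r I J) :
    setCost c (J \ F) ≤ setCost c J := by
  have hFJ := hF.2 _ (hF.1.sdiff_isIdealIn hJ)
  have hsplitF : setCost c (F \ J) + setCost c (F ∩ J) = setCost c F := by
    rw [← Finset.sdiff_inter_self_left]; exact Finset.sum_sdiff Finset.inter_subset_left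
  have hsplitJ : setCost c (J \ F) + setCost c (J ∩ F) = setCost c J := by
    rw [← Finset.sdiff_inter_self_left]; exact Finset.sum_sdiff Finset.inter_subset_left
  rw [Finset.inter_comm] at hsplitF
  linarith

end Filters

section Budgets

variable {α : Type*} [DecidableEq α] {r : α → α → Prop} {c : α → ℝ}

theorem setBudget_le_listBudget {X : Finset α} {S : List α} (hS : IsScheduleOf X S)
    (hSr : RespectsOrder r S) : setBudget r c X ≤ listBudget c S :=
  csInf_le ⟨0, by rintro _ ⟨S', -, -, rfl⟩; exact listBudget_nonneg c S'⟩ ⟨S, hS, hSr, rfl⟩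

/-- Every prefix of `S` is an ideal, so dropping the jobs of a maximum-cost filter does not raise
the cost of any prefix, and the prefixes of the filtered schedule are exactly these. -/
theorem listBudget_filter_notMem_le {I F : Finset α} {S : List α} (hS : IsScheduleOf I S)
    (hSr : RespectsOrder r S) (hF : IsMaxCostFilterIn r c I F) :
    listBudget c (S.filter (· ∉ F)) ≤ listBudget c S := by
  refine listBudget_le_iff.2 ⟨listBudget_nonneg c S, fun P hP => ?_⟩
  obtain ⟨Q, hQ, rfl⟩ := List.prefix_filter_iff.1 hP
  have hQnd : Q.Nodup := hQ.sublist.nodup hS.1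
  have hQideal : IsIdealIn r I Q.toFinset :=
    ⟨fun j hj => (hS.2 j).1 (hQ.subset (List.mem_toFinset.1 hj)), fun j hj i hi hij =>
      List.mem_toFinset.2 (respectsOrder_iff_forall_prefix.1 hSr Q hQ i j hij ((hS.2 i).2 hi)
        (List.mem_toFinset.1 hj))⟩
  calc listCost c (Q.filter (· ∉ F))
      = setCost c (Q.toFinset \ F) := by
        rw [listCost_eq_setCost c (hQnd.filter _), List.toFinset_filter]
        simp only [decide_eq_true_eq, Finset.filter_notMem_eq_sdiff]
    _ ≤ setCost c Q.toFinset := hF.setCost_sdiff_le hQideal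
    _ = listCost c Q := (listCost_eq_setCost c hQnd).symm
    _ ≤ listBudget c S := listCost_le_listBudget hQ

theorem IsMaxCostFilterIn.setBudget_sdiff_le [IsTrans α r] [Std.Antisymm r] {I F : Finset α}
    (hF : IsMaxCostFilterIn r c I F) : setBudget r c (I \ F) ≤ setBudget r c I := by
  obtain ⟨S₀, hS₀, hS₀r⟩ := exists_schedule (r := r) I
  refine le_csInf ⟨_, S₀, hS₀, hS₀r, rfl⟩ ?_
  rintro _ ⟨S, hS, hSr, rfl⟩
  exact (setBudget_le_listBudget hS.filter_notMem (hSr.filter _)).trans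
    (listBudget_filter_notMem_le hS hSr hF)

end Budgets

section CbrPreorder

variable {α : Type*} [DecidableEq α] {r : α → α → Prop} {c : α → ℝ} {X Y : Finset α}

theorem cbrLE.setCost_nonneg (h : cbrLE r c X Y) (hX : 0 ≤ setCost c X) : 0 ≤ setCost c Y := by
  rcases h with h | h | h | h
  · linarith [h.1]
  · linarith [h.1]
  · linarith [h.1]
  · exact h.2.1

theorem cbrLE.setCost_le_of_setBudget_le (h : cbrLE r c X Y) (hX : setCost c X < 0)
    (hb : setBudget r c Y ≤ setBudget r c X) : setCost c X ≤ setCost c Y := by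
  rcases h with h | h | ⟨-, -, hbe, hret⟩ | h
  · linarith [h.2]
  · linarith [h.2.2]
  · unfold setReturn at hret
    linarith
  · linarith [h.1]

end CbrPreorder

theorem irreducible_filter_cost (r : ι → ι → Prop) (hr : IsPartialOrder ι r)
    (c : ι → ℝ) (N I : Finset ι) (hI : IsIrreducibleIn r c N I) :
    ∀ F, IsFilterIn r I F → setCost c F ≤ max 0 (setCost c I) := by
  intro F hF
  rcases le_or_gt 0 (setCost c I) with hI0 | hI0
  · have hcompl := (hI.2 _ hF.isIdealIn_sdiff).setCost_nonneg hI0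
    have hsplit : setCost c (I \ F) + setCost c F = setCost c I := Finset.sum_sdiff hF.1
    rw [max_eq_right hI0]
    linarith
  · have : IsPartialOrder ι r := hr
    obtain ⟨F₀, hF₀⟩ := exists_isMaxCostFilterIn r c I
    have hcompl := (hI.2 _ hF₀.1.isIdealIn_sdiff).setCost_le_of_setBudget_le hI0
      hF₀.setBudget_sdiff_le
    have hsplit : setCost c (I \ F₀) + setCost c F₀ = setCost c I := Finset.sum_sdiff hF₀.1.1
    rw [max_eq_left hI0.le]
    linarith [hF₀.2 F hF]
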